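/- Suppose n is even. Let M be a matching of maximum weight among all matchings of size n/3 in G, and let N be a matching of maximum weight among all matchings of size n/2 in G. Then w(N) ≥ w(M) + w(X_1) + w(Y_2). -/

import Mathlib

open Finset
open scoped Classical

namespace MW3PP

/-- A 3-path `xyz`: a path on three distinct vertices with middle vertex `y`. -/
structure P3 (V : Type*) where
  x : V
  y : V
  z : V
  hxy : x ≠ y
  hyz : y ≠ z
  hxz : x ≠ z

variable {V : Type*} [Fintype V] [DecidableEq V]

/-- The vertex set of a 3-path. -/
def P3.verts (p : P3 V) : Finset V := {p.x, p.y, p.z}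

/-- The two edges of a 3-path. -/
def P3.edges (p : P3 V) : Finset (Sym2 V) := {s(p.x, p.y), s(p.y, p.z)}

/-- The weight of a 3-path. -/
def P3.wt (w : Sym2 V → ℝ) (p : P3 V) : ℝ := w s(p.x, p.y) + w s(p.y, p.z)

/-- The total weight of a set of edges. -/
def ew (w : Sym2 V → ℝ) (F : Finset (Sym2 V)) : ℝ := ∑ e ∈ F, w e

/-- The total weight of a set of 3-paths. -/
def pw (w : Sym2 V → ℝ) (P : Finset (P3 V)) : ℝ := ∑ p ∈ P, p.wt w

/-- `∑_{xyz ∈ S} max (w (xy)) (w (yz))`. -/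
def maxSum (w : Sym2 V → ℝ) (S : Finset (P3 V)) : ℝ :=
  ∑ p ∈ S, max (w s(p.x, p.y)) (w s(p.y, p.z))

/-- A perfect 3-path packing: `n/3` pairwise vertex-disjoint 3-paths covering all vertices. -/
def IsPacking (P : Finset (P3 V)) : Prop :=
  P.card = Fintype.card V / 3 ∧
  (∀ p ∈ P, ∀ q ∈ P, p ≠ q → Disjoint p.verts q.verts) ∧
  (∀ v : V, ∃ p ∈ P, v ∈ p.verts)

/-- A maximum-weight perfect 3-path packing. -/
def IsMaxPacking (w : Sym2 V → ℝ) (P : Finset (P3 V)) : Prop :=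
  IsPacking P ∧ ∀ Q : Finset (P3 V), IsPacking Q → pw w Q ≤ pw w P

/-- A matching: a set of pairwise vertex-disjoint (non-loop) edges. -/
def IsMatching (M : Finset (Sym2 V)) : Prop :=
  (∀ e ∈ M, ¬ e.IsDiag) ∧
  ∀ e ∈ M, ∀ f ∈ M, e ≠ f → ∀ v : V, v ∈ e → v ∉ f

/-- A maximum-weight matching among all matchings of size `k`. -/
def IsMaxMatchingOfSize (w : Sym2 V → ℝ) (k : ℕ) (M : Finset (Sym2 V)) : Prop :=
  IsMatching M ∧ M.card = k ∧
  ∀ M' : Finset (Sym2 V), IsMatching M' → M'.card = k → ew w M' ≤ ew w M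

/-- `v ∈ V(M)` : vertex `v` is covered by the matching `M`. -/
def covered (M : Finset (Sym2 V)) (v : V) : Prop := ∃ e ∈ M, v ∈ e

/-- `e_u` : the edge of `M` containing `u` (junk value if there is none). -/
noncomputable def eMatch (M : Finset (Sym2 V)) (u : V) : Sym2 V :=
  if h : ∃ e ∈ M, u ∈ e then h.choose else s(u, u)

/-- The cost `c` of an edge with respect to a matching `M`:
`c(uv) = w(uv) - min (w (e_u)) (w (e_v))` if both endpoints are covered by `M`,
and `c(uv) = w(uv)` otherwise. -/
noncomputable def cost (w : Sym2 V → ℝ) (M : Finset (Sym2 V)) : Sym2 V → ℝ :=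
  Sym2.lift ⟨fun u v =>
    if covered M u ∧ covered M v then
      w s(u, v) - min (w (eMatch M u)) (w (eMatch M v))
    else w s(u, v), by
      intro u v
      dsimp only
      by_cases h : covered M u ∧ covered M v
      · rw [if_pos h, if_pos (show covered M v ∧ covered M u from ⟨h.2, h.1⟩),
          Sym2.eq_swap, min_comm]
      · rw [if_neg h, if_neg (show ¬(covered M v ∧ covered M u) from fun h' => h ⟨h'.2, h'.1⟩),
          Sym2.eq_swap]⟩

/-- The total cost of a set of edges. -/
noncomputable def cw (w : Sym2 V → ℝ) (M F : Finset (Sym2 V)) : ℝ := ∑ e ∈ F, cost w M e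

/-- The number of vertices of the 3-path `p` covered by `M`. -/
noncomputable def kcnt (M : Finset (Sym2 V)) (p : P3 V) : ℕ :=
  (p.verts.filter fun v => covered M v).card

/-- Exactly one of the two edges of `p` lies in `M`. -/
def exOne (M : Finset (Sym2 V)) (p : P3 V) : Prop :=
  (s(p.x, p.y) ∈ M ∧ s(p.y, p.z) ∉ M) ∨ (s(p.x, p.y) ∉ M ∧ s(p.y, p.z) ∈ M)

def cls1 (M : Finset (Sym2 V)) (p : P3 V) : Prop := kcnt M p = 0
def cls2 (M : Finset (Sym2 V)) (p : P3 V) : Prop := kcnt M p = 1 ∧ ¬ covered M p.y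
def cls3 (M : Finset (Sym2 V)) (p : P3 V) : Prop := kcnt M p = 1 ∧ covered M p.y
def cls4 (M : Finset (Sym2 V)) (p : P3 V) : Prop := kcnt M p = 2 ∧ ¬ covered M p.y
def cls5 (M : Finset (Sym2 V)) (p : P3 V) : Prop := kcnt M p = 2 ∧ covered M p.y ∧ exOne M p
def cls6 (M : Finset (Sym2 V)) (p : P3 V) : Prop :=
  kcnt M p = 2 ∧ covered M p.y ∧ s(p.x, p.y) ∉ M ∧ s(p.y, p.z) ∉ M
def cls7 (M : Finset (Sym2 V)) (p : P3 V) : Prop := kcnt M p = 3 ∧ exOne M p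
def cls8 (M : Finset (Sym2 V)) (p : P3 V) : Prop :=
  kcnt M p = 3 ∧ s(p.x, p.y) ∉ M ∧ s(p.y, p.z) ∉ M

/-- The subset of a set of 3-paths satisfying a predicate. -/
noncomputable def psel (P : Finset (P3 V)) (c : P3 V → Prop) : Finset (P3 V) := P.filter c

/-- The set of all edges of the 3-paths in `S`. -/
def Esub (S : Finset (P3 V)) : Finset (Sym2 V) := S.biUnion P3.edges

/-- The heaviest edge of a 3-path (the edge `xy` in case of a tie). -/
noncomputable def heavy (w : Sym2 V → ℝ) (p : P3 V) : Sym2 V :=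
  if w s(p.y, p.z) ≤ w s(p.x, p.y) then s(p.x, p.y) else s(p.y, p.z)

noncomputable def X1 (w : Sym2 V → ℝ) (P : Finset (P3 V)) (M : Finset (Sym2 V)) :
    Finset (Sym2 V) := (psel P (cls1 M)).image (heavy w)
noncomputable def X2 (P : Finset (P3 V)) (M : Finset (Sym2 V)) : Finset (Sym2 V) :=
  (psel P (cls2 M)).image fun p => if covered M p.x then s(p.x, p.y) else s(p.y, p.z)
noncomputable def X3 (w : Sym2 V → ℝ) (P : Finset (P3 V)) (M : Finset (Sym2 V)) :
    Finset (Sym2 V) := (psel P (cls3 M)).image (heavy w)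
noncomputable def X4 (w : Sym2 V → ℝ) (P : Finset (P3 V)) (M : Finset (Sym2 V)) :
    Finset (Sym2 V) := (psel P (cls4 M)).image (heavy w)
noncomputable def X5 (P : Finset (P3 V)) (M : Finset (Sym2 V)) : Finset (Sym2 V) :=
  (psel P (cls5 M)).image fun p => if s(p.x, p.y) ∈ M then s(p.y, p.z) else s(p.x, p.y)
noncomputable def X6 (P : Finset (P3 V)) (M : Finset (Sym2 V)) : Finset (Sym2 V) :=
  (psel P (cls6 M)).image fun p => if covered M p.x then s(p.y, p.z) else s(p.x, p.y)
noncomputable def X7 (P : Finset (P3 V)) (M : Finset (Sym2 V)) : Finset (Sym2 V) :=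
  (psel P (cls7 M)).image fun p => if s(p.x, p.y) ∈ M then s(p.y, p.z) else s(p.x, p.y)
noncomputable def X8 (w : Sym2 V → ℝ) (P : Finset (P3 V)) (M : Finset (Sym2 V)) :
    Finset (Sym2 V) := (psel P (cls8 M)).image (heavy w)

noncomputable def Y1 (w : Sym2 V → ℝ) (P : Finset (P3 V)) (M : Finset (Sym2 V)) :
    Finset (Sym2 V) := Esub (psel P (cls1 M)) \ X1 w P M
noncomputable def Y2 (P : Finset (P3 V)) (M : Finset (Sym2 V)) : Finset (Sym2 V) :=
  Esub (psel P (cls2 M)) \ X2 P M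
noncomputable def Y3 (w : Sym2 V → ℝ) (P : Finset (P3 V)) (M : Finset (Sym2 V)) :
    Finset (Sym2 V) := Esub (psel P (cls3 M)) \ X3 w P M
noncomputable def Y4 (w : Sym2 V → ℝ) (P : Finset (P3 V)) (M : Finset (Sym2 V)) :
    Finset (Sym2 V) := Esub (psel P (cls4 M)) \ X4 w P M
noncomputable def Y5 (P : Finset (P3 V)) (M : Finset (Sym2 V)) : Finset (Sym2 V) :=
  Esub (psel P (cls5 M)) \ X5 P M
noncomputable def Y6 (P : Finset (P3 V)) (M : Finset (Sym2 V)) : Finset (Sym2 V) :=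
  Esub (psel P (cls6 M)) \ X6 P M
noncomputable def Y7 (P : Finset (P3 V)) (M : Finset (Sym2 V)) : Finset (Sym2 V) :=
  Esub (psel P (cls7 M)) \ X7 P M
noncomputable def Y8 (w : Sym2 V → ℝ) (P : Finset (P3 V)) (M : Finset (Sym2 V)) :
    Finset (Sym2 V) := Esub (psel P (cls8 M)) \ X8 w P M

/-- An edge is a middle edge (w.r.t. `M`) if exactly one of its endpoints lies in `V(M)`. -/
def isMiddle (M : Finset (Sym2 V)) (e : Sym2 V) : Prop :=
  ∃ u v : V, e = s(u, v) ∧ covered M u ∧ ¬ covered M v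

/-- Two edges share a vertex. -/
def shares (e f : Sym2 V) : Prop := ∃ v, v ∈ e ∧ v ∈ f

/-- `g` is a middle edge of some 3-path in `S`. -/
def middleIn (M : Finset (Sym2 V)) (S : Finset (P3 V)) (g : Sym2 V) : Prop :=
  (∃ p ∈ S, g ∈ p.edges) ∧ isMiddle M g

/-- The 3-paths of `P` lying in classes 2, 3 or 4. -/
noncomputable def P234 (P : Finset (P3 V)) (M : Finset (Sym2 V)) : Finset (P3 V) :=
  psel P fun p => cls2 M p ∨ cls3 M p ∨ cls4 M p

/-- `M_1`: edges of `M` sharing a vertex with at least one middle edge of a 3-path of `P*_6`. -/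
noncomputable def Mset1 (P : Finset (P3 V)) (M : Finset (Sym2 V)) : Finset (Sym2 V) :=
  M.filter fun f => ∃ g, middleIn M (psel P (cls6 M)) g ∧ shares f g

/-- `M_2`: edges of `M` sharing a vertex with at least one middle edge, all middle edges met
belonging to 3-paths of `P*_2 ∪ P*_3 ∪ P*_4`. -/
noncomputable def Mset2 (P : Finset (P3 V)) (M : Finset (Sym2 V)) : Finset (Sym2 V) :=
  M.filter fun f =>
    (∃ g, middleIn M P g ∧ shares f g) ∧
    ∀ g, middleIn M P g → shares f g → middleIn M (P234 P M) g

/-- `M_3 = M ∩ E(P*_7)`. -/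
noncomputable def Mset3 (P : Finset (P3 V)) (M : Finset (Sym2 V)) : Finset (Sym2 V) :=
  M ∩ Esub (psel P (cls7 M))

/-- `M_4 = M ∩ E(P*_5)`. -/
noncomputable def Mset4 (P : Finset (P3 V)) (M : Finset (Sym2 V)) : Finset (Sym2 V) :=
  M ∩ Esub (psel P (cls5 M))

/-- The middle edges of 3-paths of `P*_6`. -/
noncomputable def mid6 (P : Finset (P3 V)) (M : Finset (Sym2 V)) : Finset (Sym2 V) :=
  (Esub (psel P (cls6 M))).filter (isMiddle M)

/-- `M'_1`: edges of `M_1` meeting exactly one middle edge of a 3-path of `P*_6` and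
no middle edge of a 3-path of `P*_2 ∪ P*_3 ∪ P*_4`. -/
noncomputable def Mset1' (P : Finset (P3 V)) (M : Finset (Sym2 V)) : Finset (Sym2 V) :=
  (Mset1 P M).filter fun f =>
    ((mid6 P M).filter fun g => shares f g).card = 1 ∧
    ∀ g, middleIn M (P234 P M) g → ¬ shares f g

/-- `M''_1`: edges of `M_1` meeting two middle edges of 3-paths of `P*_6`. -/
noncomputable def Mset1'' (P : Finset (P3 V)) (M : Finset (Sym2 V)) : Finset (Sym2 V) :=
  (Mset1 P M).filter fun f => ((mid6 P M).filter fun g => shares f g).card = 2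

/-- `M'''_1`: edges of `M_1` meeting exactly one middle edge of a 3-path of `P*_6` and
at least one middle edge of a 3-path of `P*_2 ∪ P*_3 ∪ P*_4`. -/
noncomputable def Mset1''' (P : Finset (P3 V)) (M : Finset (Sym2 V)) : Finset (Sym2 V) :=
  (Mset1 P M).filter fun f =>
    ((mid6 P M).filter fun g => shares f g).card = 1 ∧
    ∃ g, middleIn M (P234 P M) g ∧ shares f g

/-- Assumption on `P*`: for every 3-path `xyz ∈ P*` with `y ∉ V(M)` and `x, z ∈ V(M)`,
the vertices `x` and `z` lie in two distinct edges of `M`. -/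
def Ass (P : Finset (P3 V)) (M : Finset (Sym2 V)) : Prop :=
  ∀ p ∈ P, ¬ covered M p.y → covered M p.x → covered M p.z →
    ∃ e ∈ M, ∃ f ∈ M, p.x ∈ e ∧ p.z ∈ f ∧ e ≠ f

/-- An admissible edge w.r.t. `M`: either both endpoints are in `V(M)` and lie in two distinct
edges of `M`, or exactly one endpoint is in `V(M)`. -/
def goodEdge (M : Finset (Sym2 V)) (e : Sym2 V) : Prop :=
  (∃ u v : V, e = s(u, v) ∧ covered M u ∧ covered M v ∧ ∀ f ∈ M, ¬(u ∈ f ∧ v ∈ f)) ∨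
  (∃ u v : V, e = s(u, v) ∧ covered M u ∧ ¬ covered M v)

end MW3PP

/-! Every edge of `X_1 ∪ Y_2` is an edge of a 3-path of `P*` avoiding `V(M)`, and each 3-path of
`P*` contributes at most one such edge. As the 3-paths of `P*` are vertex-disjoint, `M ∪ X_1 ∪ Y_2`
is a matching. Adding edges between uncovered vertices one at a time extends it to a matching of
size `⌊n/2⌋`, which weighs at least `w(M) + w(X_1) + w(Y_2)` as the weights are nonnegative;
`N` weighs at least as much. -/

namespace MW3PP

variable {V : Type*}

lemma IsMatching.subset {M₀ M₁ : Finset (Sym2 V)} (h : IsMatching M₁) (hsub : M₀ ⊆ M₁) :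
    IsMatching M₀ :=
  ⟨fun e he => h.1 e (hsub he), fun e he f hf => h.2 e (hsub he) f (hsub hf)⟩

lemma isMatching_singleton {a b : V} (hab : a ≠ b) : IsMatching {s(a, b)} :=
  ⟨by simpa using hab, by simp⟩

lemma IsMatching.union [DecidableEq V] {M B : Finset (Sym2 V)} (hM : IsMatching M)
    (hB : IsMatching B) (hfree : ∀ e ∈ B, ∀ v ∈ e, ¬ covered M v) : IsMatching (M ∪ B) := by
  refine ⟨fun e he => (mem_union.1 he).elim (hM.1 e) (hB.1 e), ?_⟩
  intro e he f hf hef v hve hvf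
  rcases mem_union.1 he with he | he <;> rcases mem_union.1 hf with hf | hf
  · exact hM.2 e he f hf hef v hve hvf
  · exact hfree f hf v hvf ⟨e, he, hve⟩
  · exact hfree e he v hve ⟨f, hf, hvf⟩
  · exact hB.2 e he f hf hef v hve hvf

lemma IsMatching.insert [DecidableEq V] {M : Finset (Sym2 V)} (hM : IsMatching M) {a b : V}
    (hab : a ≠ b) (ha : ¬ covered M a) (hb : ¬ covered M b) : IsMatching (insert s(a, b) M) := by
  rw [insert_eq, union_comm]
  refine hM.union (isMatching_singleton hab) ?_
  simp only [mem_singleton, forall_eq, Sym2.mem_iff, forall_eq_or_imp]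
  exact ⟨ha, hb⟩

lemma disjoint_of_forall_not_covered {M B : Finset (Sym2 V)}
    (hfree : ∀ e ∈ B, ∀ v ∈ e, ¬ covered M v) : Disjoint M B :=
  disjoint_left.2 fun e heM heB => hfree e heB _ (Sym2.out_fst_mem e) ⟨e, heM, Sym2.out_fst_mem e⟩

lemma IsMatching.card_filter_covered [Fintype V] [DecidableEq V] {M : Finset (Sym2 V)}
    (hM : IsMatching M) :
    (univ.filter (covered M)).card = 2 * M.card := by
  have hcov : univ.filter (covered M) = M.biUnion Sym2.toFinset := by
    ext v
    simp [covered]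
  rw [hcov, card_biUnion, sum_congr rfl fun e he => Sym2.card_toFinset_of_not_isDiag e (hM.1 e he),
    sum_const, smul_eq_mul, mul_comm]
  intro e he f hf hef
  exact disjoint_left.2 fun v hve hvf =>
    hM.2 e he f hf hef v (Sym2.mem_toFinset.1 hve) (Sym2.mem_toFinset.1 hvf)

lemma IsMatching.exists_not_covered_pair [Fintype V] [DecidableEq V] {M : Finset (Sym2 V)}
    (hM : IsMatching M) (hroom : 2 * M.card + 2 ≤ Fintype.card V) :
    ∃ a b, a ≠ b ∧ ¬ covered M a ∧ ¬ covered M b := by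
  have hsplit := card_filter_add_card_filter_not (s := univ) (covered M)
  rw [hM.card_filter_covered, card_univ] at hsplit
  obtain ⟨a, ha, b, hb, hab⟩ :=
    one_lt_card.1 (show 1 < (univ.filter (¬ covered M ·)).card by omega)
  exact ⟨a, b, hab, (mem_filter.1 ha).2, (mem_filter.1 hb).2⟩

lemma IsMatching.exists_superset_card_eq_half [Fintype V] [DecidableEq V]
    {M : Finset (Sym2 V)} (hM : IsMatching M) :
    ∃ M', IsMatching M' ∧ M'.card = Fintype.card V / 2 ∧ M ⊆ M' := by
  suffices ∀ k (M : Finset (Sym2 V)), IsMatching M → M.card + k = Fintype.card V / 2 →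
      ∃ M', IsMatching M' ∧ M'.card = Fintype.card V / 2 ∧ M ⊆ M' by
    have hle := hM.card_filter_covered ▸ card_filter_le univ (covered M)
    rw [card_univ] at hle
    exact this (Fintype.card V / 2 - M.card) M hM (by omega)
  intro k
  induction k with
  | zero => exact fun M hM hk => ⟨M, hM, hk, subset_rfl⟩
  | succ k ih =>
    intro M hM hk
    obtain ⟨a, b, hab, ha, hb⟩ := hM.exists_not_covered_pair (by omega)
    have hnew : s(a, b) ∉ M := fun h => ha ⟨_, h, Sym2.mem_mk_left a b⟩
    obtain ⟨M', hM', hcard, hsub⟩ :=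
      ih _ (hM.insert hab ha hb) (by rw [card_insert_of_notMem hnew]; omega)
    exact ⟨M', hM', hcard, (subset_insert _ _).trans hsub⟩

namespace P3

variable [DecidableEq V]

lemma y_mem_of_mem_edges {p : P3 V} {e : Sym2 V} (he : e ∈ p.edges) : p.y ∈ e := by
  simp only [P3.edges, mem_insert, mem_singleton] at he
  rcases he with rfl | rfl <;> simp

lemma mem_verts_of_mem_edges {p : P3 V} {e : Sym2 V} (he : e ∈ p.edges) {v : V} (hv : v ∈ e) :
    v ∈ p.verts := by
  simp only [P3.edges, mem_insert, mem_singleton] at he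
  rcases he with rfl | rfl <;> rcases Sym2.mem_iff.1 hv with rfl | rfl <;> simp [P3.verts]

lemma not_isDiag_of_mem_edges {p : P3 V} {e : Sym2 V} (he : e ∈ p.edges) : ¬ e.IsDiag := by
  simp only [P3.edges, mem_insert, mem_singleton] at he
  rcases he with rfl | rfl
  · simpa using p.hxy
  · simpa using p.hyz

lemma eq_of_mem_edges {P : Finset (P3 V)}
    (hP : ∀ p ∈ P, ∀ q ∈ P, p ≠ q → Disjoint p.verts q.verts) {p q : P3 V} (hp : p ∈ P)
    (hq : q ∈ P) {e : Sym2 V} (hep : e ∈ p.edges) (heq : e ∈ q.edges) : p = q := by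
  by_contra hpq
  have hy := y_mem_of_mem_edges hep
  exact disjoint_left.1 (hP p hp q hq hpq) (mem_verts_of_mem_edges hep hy)
    (mem_verts_of_mem_edges heq hy)

lemma isMatching_image {P : Finset (P3 V)}
    (hP : ∀ p ∈ P, ∀ q ∈ P, p ≠ q → Disjoint p.verts q.verts) {g : P3 V → Sym2 V}
    (hg : ∀ p, g p ∈ p.edges) : IsMatching (P.image g) := by
  refine ⟨?_, ?_⟩
  · simp only [mem_image, forall_exists_index, and_imp, forall_apply_eq_imp_iff₂]
    exact fun p _ => not_isDiag_of_mem_edges (hg p)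
  · simp only [mem_image, forall_exists_index, and_imp, forall_apply_eq_imp_iff₂]
    intro p hp q hq hpq v hvp hvq
    exact disjoint_left.1 (hP p hp q hq fun h => hpq (congrArg g h))
      (mem_verts_of_mem_edges (hg p) hvp) (mem_verts_of_mem_edges (hg q) hvq)

lemma heavy_mem_edges (w : Sym2 V → ℝ) (p : P3 V) : heavy w p ∈ p.edges := by
  unfold heavy P3.edges
  split <;> simp

lemma not_covered_of_kcnt_eq_zero {M : Finset (Sym2 V)} {p : P3 V} (h : kcnt M p = 0)
    {v : V} (hv : v ∈ p.verts) : ¬ covered M v := fun hc =>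
  notMem_empty v (card_eq_zero.1 h ▸ mem_filter.2 ⟨hv, hc⟩)

lemma two_le_kcnt {M : Finset (Sym2 V)} {p : P3 V} (hx : covered M p.x) (hz : covered M p.z) :
    2 ≤ kcnt M p := by
  have hsub : ({p.x, p.z} : Finset V) ⊆ p.verts.filter (covered M) := by
    simp [insert_subset_iff, P3.verts, hx, hz]
  simpa [kcnt, card_pair p.hxz] using card_le_card hsub

end P3

/-- For `p ∈ P*_1 ∪ P*_2`, the edge of `p` that lies in `X_1 ∪ Y_2`. -/
noncomputable def freeEdge [DecidableEq V] (w : Sym2 V → ℝ) (M : Finset (Sym2 V)) (p : P3 V) :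
    Sym2 V :=
  if cls1 M p then heavy w p else if covered M p.x then s(p.y, p.z) else s(p.x, p.y)

section FreeEdge

variable [DecidableEq V] {w : Sym2 V → ℝ} {P : Finset (P3 V)} {M : Finset (Sym2 V)}

lemma freeEdge_mem_edges (w : Sym2 V → ℝ) (M : Finset (Sym2 V)) (p : P3 V) :
    freeEdge w M p ∈ p.edges := by
  unfold freeEdge
  split
  · exact P3.heavy_mem_edges w p
  · split <;> simp [P3.edges]

lemma not_covered_of_mem_freeEdge {p : P3 V} (hp : cls1 M p ∨ cls2 M p) {v : V}
    (hv : v ∈ freeEdge w M p) : ¬ covered M v := by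
  rcases hp with h1 | ⟨h1, hy⟩
  · rw [freeEdge, if_pos h1] at hv
    exact P3.not_covered_of_kcnt_eq_zero h1
      (P3.mem_verts_of_mem_edges (P3.heavy_mem_edges w p) hv)
  · have hnot1 : ¬ cls1 M p := fun h0 => zero_ne_one (Eq.trans (Eq.symm h0) h1)
    rw [freeEdge, if_neg hnot1] at hv
    split_ifs at hv with hx
    · have hz : ¬ covered M p.z := fun hz => by have := P3.two_le_kcnt hx hz; omega
      rcases Sym2.mem_iff.1 hv with rfl | rfl <;> assumption
    · rcases Sym2.mem_iff.1 hv with rfl | rfl <;> assumption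

lemma exists_freeEdge_eq_of_mem {e : Sym2 V} (he : e ∈ X1 w P M ∪ Y2 P M) :
    ∃ p ∈ P, (cls1 M p ∨ cls2 M p) ∧ freeEdge w M p = e := by
  rcases mem_union.1 he with hX | hY
  · obtain ⟨p, hp, rfl⟩ := mem_image.1 hX
    obtain ⟨hpP, h1⟩ := mem_filter.1 hp
    exact ⟨p, hpP, .inl h1, if_pos h1⟩
  · obtain ⟨hE, hX2⟩ := mem_sdiff.1 hY
    obtain ⟨p, hp, hep⟩ := mem_biUnion.1 hE
    obtain ⟨hpP, h2⟩ := mem_filter.1 hp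
    have hnot1 : ¬ cls1 M p := fun h0 => zero_ne_one (Eq.trans (Eq.symm h0) h2.1)
    refine ⟨p, hpP, .inr h2, ?_⟩
    have hX2p :=
      mem_image_of_mem (fun p => if covered M p.x then s(p.x, p.y) else s(p.y, p.z)) hp
    rw [freeEdge, if_neg hnot1]
    -- `Y_2` keeps from `p` exactly the edge that `X_2` does not take.
    simp only [P3.edges, mem_insert, mem_singleton] at hep
    split_ifs at hX2p ⊢ <;> rcases hep with rfl | rfl <;> first | rfl | exact absurd hX2p hX2

lemma not_covered_of_mem_X1_union_Y2 {e : Sym2 V} (he : e ∈ X1 w P M ∪ Y2 P M) {v : V}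
    (hv : v ∈ e) : ¬ covered M v := by
  obtain ⟨p, -, hp, rfl⟩ := exists_freeEdge_eq_of_mem he
  exact not_covered_of_mem_freeEdge hp hv

lemma isMatching_X1_union_Y2 (hP : ∀ p ∈ P, ∀ q ∈ P, p ≠ q → Disjoint p.verts q.verts) :
    IsMatching (X1 w P M ∪ Y2 P M) :=
  (P3.isMatching_image hP (freeEdge_mem_edges w M)).subset fun e he => by
    obtain ⟨p, hp, -, rfl⟩ := exists_freeEdge_eq_of_mem he
    exact mem_image_of_mem _ hp

lemma disjoint_X1_Y2 (hP : ∀ p ∈ P, ∀ q ∈ P, p ≠ q → Disjoint p.verts q.verts) :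
    Disjoint (X1 w P M) (Y2 P M) := by
  refine disjoint_left.2 fun e hX hY => ?_
  obtain ⟨p, hp, rfl⟩ := mem_image.1 hX
  obtain ⟨hpP, h1⟩ := mem_filter.1 hp
  obtain ⟨q, hq, heq⟩ := mem_biUnion.1 (mem_sdiff.1 hY).1
  obtain ⟨hqP, h2⟩ := mem_filter.1 hq
  obtain rfl := P3.eq_of_mem_edges hP hpP hqP (P3.heavy_mem_edges w p) heq
  exact zero_ne_one (h1.symm.trans h2.1)

end FreeEdge

variable [Fintype V] [DecidableEq V]

theorem statement_7_general (n : ℕ) (hn : Fintype.card V = n)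
    (w : Sym2 V → ℝ) (hw : ∀ e : Sym2 V, 0 ≤ w e)
    (M : Finset (Sym2 V)) (hM : IsMaxMatchingOfSize w (n / 3) M)
    (N : Finset (Sym2 V)) (hN : IsMaxMatchingOfSize w (n / 2) N)
    (Pstar : Finset (P3 V)) (hP : IsMaxPacking w Pstar) :
    ew w M + ew w (X1 w Pstar M) + ew w (Y2 Pstar M) ≤ ew w N := by
  subst hn
  have hdisj := hP.1.2.1
  have hfree : ∀ e ∈ X1 w Pstar M ∪ Y2 Pstar M, ∀ v ∈ e, ¬ covered M v :=
    fun _ he _ hv => not_covered_of_mem_X1_union_Y2 he hv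
  obtain ⟨M', hM', hcard, hsub⟩ :=
    (hM.1.union (isMatching_X1_union_Y2 hdisj) hfree).exists_superset_card_eq_half
  calc ew w M + ew w (X1 w Pstar M) + ew w (Y2 Pstar M)
      = ew w (M ∪ (X1 w Pstar M ∪ Y2 Pstar M)) := by
        rw [ew, ew, ew, ew, sum_union (disjoint_of_forall_not_covered hfree),
          sum_union (disjoint_X1_Y2 hdisj), add_assoc]
    _ ≤ ew w M' := sum_le_sum_of_subset_of_nonneg hsub fun e _ _ => hw e
    _ ≤ ew w N := hN.2.2 M' hM' hcard

theorem statement_7 (n : ℕ) (hn : Fintype.card V = n) (h3 : 3 ∣ n) (h2 : 2 ∣ n)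
    (w : Sym2 V → ℝ) (hw : ∀ e : Sym2 V, 0 ≤ w e)
    (M : Finset (Sym2 V)) (hM : IsMaxMatchingOfSize w (n / 3) M)
    (N : Finset (Sym2 V)) (hN : IsMaxMatchingOfSize w (n / 2) N)
    (Pstar : Finset (P3 V)) (hP : IsMaxPacking w Pstar) (hAss : Ass Pstar M) :
    ew w M + ew w (X1 w Pstar M) + ew w (Y2 Pstar M) ≤ ew w N :=
  statement_7_general n hn w hw M hM N hN Pstar hP

end MW3PP
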